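/- Fix γ ∈ ℝ. For smooth f : ℝ² → ℂ⁴ in the coordinates (x, y), write φ = x + iy and φ̄ = x − iy (acting by multiplication), ∂_φ f = (∂f/∂x − i·∂f/∂y)/2, ∂_φ̄ f = (∂f/∂x + i·∂f/∂y)/2. With the 4×4 matrices below, set F = ψ₁ψ̄¹ + ψ₂ψ̄², and define (Q_α f) = √2·[ψ_α·(−i ∂_φ f − i φ̄ f) + i γ φ̄²·ψ̄_α f], (Q̄^α f) = √2·[ψ̄^α·(−i ∂_φ̄ f + i φ f) + i γ φ²·ψ^α f], and (H f) = −∂_φ̄ ∂_φ f + φ φ̄ f + (F − I₄) f + (1/3)·[(φ ∂_φ f − φ̄ ∂_φ̄ f) + F f] + 2γ·(φ·ψ₁ψ₂ + φ̄·ψ̄²ψ̄¹) f + γ²·(φ φ̄)² f. Then for every smooth f : ℝ² → ℂ⁴ and all α, β ∈ {1,2}: Q_α(Q̄^β f) + Q̄^β(Q_α f) = 2 δ_α^β·[H f + (2/3)(φ ∂_φ f − φ̄ ∂_φ̄ f) − (1/3) F f] + 2·Z_α{}^β f, and Q_α(H f) = H(Q_α f). -/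

import Mathlib

open Matrix Kronecker

noncomputable section

/-- `ε^{αβ}` with `ε^{12} = -ε^{21} = 1` (indices `0,1` standing for `1,2`). -/
def εup : Fin 2 → Fin 2 → ℂ := fun α β =>
  if α = 0 ∧ β = 1 then 1 else if α = 1 ∧ β = 0 then -1 else 0

/-- `ε_{αβ}` with `ε_{12} = -ε_{21} = -1`. -/
def εdown : Fin 2 → Fin 2 → ℂ := fun α β =>
  if α = 0 ∧ β = 1 then -1 else if α = 1 ∧ β = 0 then 1 else 0

/-- The fermion matrices `ψ₁ = A ⊗ I₂`, `ψ₂ = S ⊗ A` with `A = !![0,1;0,0]`,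
`S = !![1,0;0,−1]`. -/
def ψm : Fin 2 → Matrix (Fin 2 × Fin 2) (Fin 2 × Fin 2) ℂ :=
  ![(!![0,1;0,0] : Matrix (Fin 2) (Fin 2) ℂ) ⊗ₖ (1 : Matrix (Fin 2) (Fin 2) ℂ),
    (!![1,0;0,-1] : Matrix (Fin 2) (Fin 2) ℂ) ⊗ₖ (!![0,1;0,0] : Matrix (Fin 2) (Fin 2) ℂ)]

/-- `ψ̄^α = (ψ_α)ᴴ`. -/
def ψbarm (α : Fin 2) : Matrix (Fin 2 × Fin 2) (Fin 2 × Fin 2) ℂ := (ψm α)ᴴ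

/-- `ψ^α = Σ_β ε^{αβ} ψ_β`. -/
def ψupm (α : Fin 2) : Matrix (Fin 2 × Fin 2) (Fin 2 × Fin 2) ℂ := ∑ β, εup α β • ψm β

/-- `ψ̄_α = Σ_β ε_{αβ} ψ̄^β`. -/
def ψbardownm (α : Fin 2) : Matrix (Fin 2 × Fin 2) (Fin 2 × Fin 2) ℂ :=
  ∑ β, εdown α β • ψbarm β

/-- `Z_α{}^β = ψ_α ψ̄^β + ψ^β ψ̄_α`. -/
def Zm (α β : Fin 2) : Matrix (Fin 2 × Fin 2) (Fin 2 × Fin 2) ℂ :=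
  ψm α * ψbarm β + ψupm β * ψbardownm α

/-- The fermion-number matrix `F = ψ₁ψ̄¹ + ψ₂ψ̄²`. -/
def Fm : Matrix (Fin 2 × Fin 2) (Fin 2 × Fin 2) ℂ :=
  ψm 0 * ψbarm 0 + ψm 1 * ψbarm 1

/-- `∂f/∂x`. -/
def Dx (f : ℝ × ℝ → Fin 2 × Fin 2 → ℂ) : ℝ × ℝ → Fin 2 × Fin 2 → ℂ :=
  fun p => fderiv ℝ f p (1, 0)

/-- `∂f/∂y`. -/
def Dy (f : ℝ × ℝ → Fin 2 × Fin 2 → ℂ) : ℝ × ℝ → Fin 2 × Fin 2 → ℂ :=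
  fun p => fderiv ℝ f p (0, 1)

/-- `∂_φ f = (∂f/∂x − i ∂f/∂y)/2`. -/
def Dφ (f : ℝ × ℝ → Fin 2 × Fin 2 → ℂ) : ℝ × ℝ → Fin 2 × Fin 2 → ℂ :=
  fun p => (2 : ℂ)⁻¹ • (Dx f p - Complex.I • Dy f p)

/-- `∂_φ̄ f = (∂f/∂x + i ∂f/∂y)/2`. -/
def Dφb (f : ℝ × ℝ → Fin 2 × Fin 2 → ℂ) : ℝ × ℝ → Fin 2 × Fin 2 → ℂ :=
  fun p => (2 : ℂ)⁻¹ • (Dx f p + Complex.I • Dy f p)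

/-- `φ = x + iy`. -/
def φc (p : ℝ × ℝ) : ℂ := p.1 + Complex.I * p.2

/-- `φ̄ = x − iy`. -/
def φbc (p : ℝ × ℝ) : ℂ := p.1 - Complex.I * p.2

/-- The deformed supercharge (4.16):
`Q_α f = √2 [ψ_α (−i ∂_φ f − i φ̄ f) + iγ φ̄² ψ̄_α f]`. -/
def Qop (γ : ℝ) (α : Fin 2) (f : ℝ × ℝ → Fin 2 × Fin 2 → ℂ) :
    ℝ × ℝ → Fin 2 × Fin 2 → ℂ := fun p =>
  (Real.sqrt 2 : ℂ) •
    (ψm α *ᵥ (-Complex.I • Dφ f p - (Complex.I * φbc p) • f p)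
      + (Complex.I * (γ : ℂ) * (φbc p) ^ 2) • (ψbardownm α *ᵥ f p))

/-- The deformed supercharge (4.16):
`Q̄^α f = √2 [ψ̄^α (−i ∂_φ̄ f + i φ f) + iγ φ² ψ^α f]`. -/
def Qbarop (γ : ℝ) (α : Fin 2) (f : ℝ × ℝ → Fin 2 × Fin 2 → ℂ) :
    ℝ × ℝ → Fin 2 × Fin 2 → ℂ := fun p =>
  (Real.sqrt 2 : ℂ) •
    (ψbarm α *ᵥ (-Complex.I • Dφb f p + (Complex.I * φc p) • f p)
      + (Complex.I * (γ : ℂ) * (φc p) ^ 2) • (ψupm α *ᵥ f p))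

/-- The deformed Hamiltonian (4.17):
`H f = −∂_φ̄ ∂_φ f + φφ̄ f + (F − I₄) f + (1/3)[(φ ∂_φ f − φ̄ ∂_φ̄ f) + F f]
+ 2γ (φ ψ₁ψ₂ + φ̄ ψ̄²ψ̄¹) f + γ² (φφ̄)² f`. -/
def Hop (γ : ℝ) (f : ℝ × ℝ → Fin 2 × Fin 2 → ℂ) :
    ℝ × ℝ → Fin 2 × Fin 2 → ℂ := fun p =>
  -(Dφb (Dφ f) p) + (φc p * φbc p) • f p + (Fm - 1) *ᵥ f p
    + (3 : ℂ)⁻¹ • ((φc p • Dφ f p - φbc p • Dφb f p) + Fm *ᵥ f p)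
    + (2 * (γ : ℂ)) •
        (φc p • ((ψm 0 * ψm 1) *ᵥ f p) + φbc p • ((ψbarm 1 * ψbarm 0) *ᵥ f p))
    + ((γ : ℂ) ^ 2 * (φc p * φbc p) ^ 2) • f p

/-! ### Auxiliary calculus infrastructure -/

open scoped ContDiff

section AuxCalc

abbrev V4 := (Fin 2 × Fin 2) → ℂ
abbrev P2 := ℝ × ℝ

variable {u v : P2 → V4} {g h : P2 → ℂ}

/-- `mulVec` as a continuous `ℝ`-linear map. -/
def mvCLM (M : Matrix (Fin 2 × Fin 2) (Fin 2 × Fin 2) ℂ) : V4 →L[ℝ] V4 :=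
  LinearMap.toContinuousLinearMap ((Matrix.mulVecLin M).restrictScalars ℝ)

lemma Sm_mulVec (M : Matrix (Fin 2 × Fin 2) (Fin 2 × Fin 2) ℂ)
    (hu : ContDiff ℝ ∞ u) : ContDiff ℝ ∞ (fun p => M *ᵥ u p) :=
  (mvCLM M).contDiff.comp hu

lemma Sm_fderiv (hu : ContDiff ℝ ∞ u) : ContDiff ℝ ∞ (fderiv ℝ u) :=
  (contDiff_infty_iff_fderiv.mp hu).2

lemma Sm_dv (w : P2) (hu : ContDiff ℝ ∞ u) :
    ContDiff ℝ ∞ (fun p => fderiv ℝ u p w) :=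
  (Sm_fderiv hu).clm_apply contDiff_const

lemma diff_of_sm (hu : ContDiff ℝ ∞ u) : Differentiable ℝ u :=
  hu.differentiable (by norm_cast)

lemma Smc_diff (hg : ContDiff ℝ ∞ g) : Differentiable ℝ g :=
  hg.differentiable (by norm_cast)

lemma Sm_Dphi (hu : ContDiff ℝ ∞ u) : ContDiff ℝ ∞ (Dφ u) :=
  ((Sm_dv ((1:ℝ),(0:ℝ)) hu).sub ((Sm_dv ((0:ℝ),(1:ℝ)) hu).const_smul Complex.I)).const_smul
    ((2:ℂ)⁻¹)

lemma Sm_Dphib (hu : ContDiff ℝ ∞ u) : ContDiff ℝ ∞ (Dφb u) :=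
  ((Sm_dv ((1:ℝ),(0:ℝ)) hu).add ((Sm_dv ((0:ℝ),(1:ℝ)) hu).const_smul Complex.I)).const_smul
    ((2:ℂ)⁻¹)

lemma Sm_smul (hg : ContDiff ℝ ∞ g) (hu : ContDiff ℝ ∞ u) :
    ContDiff ℝ ∞ (fun p => g p • u p) :=
  (isBoundedBilinearMap_smul (𝕜 := ℝ) (A := ℂ) (E := V4)).contDiff.comp (hg.prodMk hu)

/-! #### Pointwise `fderiv` computations -/

lemma fderiv_mulVec_apply (M : Matrix (Fin 2 × Fin 2) (Fin 2 × Fin 2) ℂ)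
    (hu : ContDiff ℝ ∞ u) (p w : P2) :
    fderiv ℝ (fun q => M *ᵥ u q) p w = M *ᵥ fderiv ℝ u p w := by
  have hD := (diff_of_sm hu) p
  have h2 : fderiv ℝ (fun q => mvCLM M (u q)) p = (mvCLM M).comp (fderiv ℝ u p) :=
    ((mvCLM M).hasFDerivAt.comp p hD.hasFDerivAt).fderiv
  calc fderiv ℝ (fun q => M *ᵥ u q) p w = ((mvCLM M).comp (fderiv ℝ u p)) w := by
        rw [← h2]; rfl
    _ = M *ᵥ fderiv ℝ u p w := rfl

lemma fderiv_add_apply (hu : ContDiff ℝ ∞ u) (hv : ContDiff ℝ ∞ v) (p w : P2) :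
    fderiv ℝ (fun q => u q + v q) p w = fderiv ℝ u p w + fderiv ℝ v p w := by
  rw [fderiv_fun_add (diff_of_sm hu p) (diff_of_sm hv p)]; rfl

lemma fderiv_smul_apply (hg : ContDiff ℝ ∞ g) (hu : ContDiff ℝ ∞ u) (p w : P2) :
    fderiv ℝ (fun q => g q • u q) p w
      = fderiv ℝ g p w • u p + g p • fderiv ℝ u p w := by
  rw [fderiv_fun_smul (Smc_diff hg p) (diff_of_sm hu p)]
  simp only [ContinuousLinearMap.add_apply, ContinuousLinearMap.coe_smul', Pi.smul_apply,
    ContinuousLinearMap.smulRight_apply]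
  abel

/-- Clairaut: symmetry of second derivatives. -/
lemma clairaut (hu : ContDiff ℝ ∞ u) (w1 w2 : P2) (p : P2) :
    fderiv ℝ (fun q => fderiv ℝ u q w1) p w2
      = fderiv ℝ (fun q => fderiv ℝ u q w2) p w1 := by
  have hsym : ∀ a b, fderiv ℝ (fderiv ℝ u) p a b = fderiv ℝ (fderiv ℝ u) p b a :=
    (hu.contDiffAt.isSymmSndFDerivAt (by simp; norm_cast))
  have key : ∀ (a b : P2), fderiv ℝ (fun q => fderiv ℝ u q a) p b
      = fderiv ℝ (fderiv ℝ u) p b a := by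
    intro a b
    have hd : DifferentiableAt ℝ (fderiv ℝ u) p := ((Sm_fderiv hu).differentiable (by norm_cast)) p
    have h2 := ((ContinuousLinearMap.apply ℝ V4 a).hasFDerivAt.comp p hd.hasFDerivAt).fderiv
    calc fderiv ℝ (fun q => fderiv ℝ u q a) p b
        = ((ContinuousLinearMap.apply ℝ V4 a).comp (fderiv ℝ (fderiv ℝ u) p)) b := by
          rw [← h2]; rfl
      _ = fderiv ℝ (fderiv ℝ u) p b a := rfl
  rw [key, key, hsym]

/-! #### Rules for `Dφ`, `Dφb` -/

lemma Dphi_add (hu : ContDiff ℝ ∞ u) (hv : ContDiff ℝ ∞ v) :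
    Dφ (fun p => u p + v p) = fun p => Dφ u p + Dφ v p := by
  funext p
  simp only [Dφ, Dx, Dy, fderiv_add_apply hu hv]
  module

lemma Dphib_add (hu : ContDiff ℝ ∞ u) (hv : ContDiff ℝ ∞ v) :
    Dφb (fun p => u p + v p) = fun p => Dφb u p + Dφb v p := by
  funext p
  simp only [Dφb, Dx, Dy, fderiv_add_apply hu hv]
  module

lemma Dphi_mulVec (M : Matrix (Fin 2 × Fin 2) (Fin 2 × Fin 2) ℂ) (hu : ContDiff ℝ ∞ u) :
    Dφ (fun p => M *ᵥ u p) = fun p => M *ᵥ Dφ u p := by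
  funext p
  simp only [Dφ, Dx, Dy, fderiv_mulVec_apply M hu, Matrix.mulVec_smul, Matrix.mulVec_sub]

lemma Dphib_mulVec (M : Matrix (Fin 2 × Fin 2) (Fin 2 × Fin 2) ℂ) (hu : ContDiff ℝ ∞ u) :
    Dφb (fun p => M *ᵥ u p) = fun p => M *ᵥ Dφb u p := by
  funext p
  simp only [Dφb, Dx, Dy, fderiv_mulVec_apply M hu, Matrix.mulVec_smul, Matrix.mulVec_add]

/-- The scalar `∂_φ`. -/
def dphi (g : P2 → ℂ) : P2 → ℂ :=
  fun p => (2:ℂ)⁻¹ * (fderiv ℝ g p (1,0) - Complex.I * fderiv ℝ g p (0,1))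

/-- The scalar `∂_φ̄`. -/
def dphib (g : P2 → ℂ) : P2 → ℂ :=
  fun p => (2:ℂ)⁻¹ * (fderiv ℝ g p (1,0) + Complex.I * fderiv ℝ g p (0,1))

lemma Dphi_smul (hg : ContDiff ℝ ∞ g) (hu : ContDiff ℝ ∞ u) :
    Dφ (fun p => g p • u p) = fun p => dphi g p • u p + g p • Dφ u p := by
  funext p
  simp only [Dφ, Dx, Dy, fderiv_smul_apply hg hu, dphi]
  module

lemma Dphib_smul (hg : ContDiff ℝ ∞ g) (hu : ContDiff ℝ ∞ u) :
    Dφb (fun p => g p • u p) = fun p => dphib g p • u p + g p • Dφb u p := by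
  funext p
  simp only [Dφb, Dx, Dy, fderiv_smul_apply hg hu, dphib]
  module

lemma fderiv_comb (hu : ContDiff ℝ ∞ u) (a b : ℂ) (v1 v2 p w : P2) :
    fderiv ℝ (fun q => a • fderiv ℝ u q v1 + b • fderiv ℝ u q v2) p w
      = a • fderiv ℝ (fun q => fderiv ℝ u q v1) p w
        + b • fderiv ℝ (fun q => fderiv ℝ u q v2) p w := by
  have h1 : DifferentiableAt ℝ (fun q => fderiv ℝ u q v1) p := diff_of_sm (Sm_dv v1 hu) p
  have h2 : DifferentiableAt ℝ (fun q => fderiv ℝ u q v2) p := diff_of_sm (Sm_dv v2 hu) p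
  rw [fderiv_fun_add (f := fun q => a • fderiv ℝ u q v1) (g := fun q => b • fderiv ℝ u q v2)
    (h1.const_smul a) (h2.const_smul b), fderiv_fun_const_smul h1 a,
    fderiv_fun_const_smul h2 b]
  rfl

lemma Dphi_eq' : Dφ u = fun q => (2:ℂ)⁻¹ • fderiv ℝ u q (1,0)
    + (-((2:ℂ)⁻¹ * Complex.I)) • fderiv ℝ u q (0,1) := by
  funext q; simp only [Dφ, Dx, Dy]; module

lemma Dphib_eq' : Dφb u = fun q => (2:ℂ)⁻¹ • fderiv ℝ u q (1,0)
    + ((2:ℂ)⁻¹ * Complex.I) • fderiv ℝ u q (0,1) := by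
  funext q; simp only [Dφb, Dx, Dy]; module

/-- Mixed partials commute. -/
lemma Dphi_Dphib_comm (hu : ContDiff ℝ ∞ u) : Dφb (Dφ u) = Dφ (Dφb u) := by
  funext p
  have h1 : ∀ w, fderiv ℝ (Dφ u) p w
      = (2:ℂ)⁻¹ • fderiv ℝ (fun q => fderiv ℝ u q (1,0)) p w
        + (-((2:ℂ)⁻¹ * Complex.I)) • fderiv ℝ (fun q => fderiv ℝ u q (0,1)) p w := by
    intro w
    conv_lhs => rw [Dphi_eq' (u := u)]
    exact fderiv_comb hu _ _ _ _ _ _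
  have h2 : ∀ w, fderiv ℝ (Dφb u) p w
      = (2:ℂ)⁻¹ • fderiv ℝ (fun q => fderiv ℝ u q (1,0)) p w
        + ((2:ℂ)⁻¹ * Complex.I) • fderiv ℝ (fun q => fderiv ℝ u q (0,1)) p w := by
    intro w
    conv_lhs => rw [Dphib_eq' (u := u)]
    exact fderiv_comb hu _ _ _ _ _ _
  show (2:ℂ)⁻¹ • (fderiv ℝ (Dφ u) p (1,0) + Complex.I • fderiv ℝ (Dφ u) p (0,1))
      = (2:ℂ)⁻¹ • (fderiv ℝ (Dφb u) p (1,0) - Complex.I • fderiv ℝ (Dφb u) p (0,1))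
  rw [h1, h1, h2, h2, clairaut hu (1,0) (0,1)]
  module

end AuxCalc

/-! ### Scalar derivatives of the coefficient functions -/

section AuxScalar

variable {g h : P2 → ℂ}

/-- `φ` as a continuous linear map. -/
def LphiC : P2 →L[ℝ] ℂ :=
  Complex.ofRealCLM.comp (ContinuousLinearMap.fst ℝ ℝ ℝ)
    + Complex.I • Complex.ofRealCLM.comp (ContinuousLinearMap.snd ℝ ℝ ℝ)

/-- `φ̄` as a continuous linear map. -/
def LphibC : P2 →L[ℝ] ℂ :=
  Complex.ofRealCLM.comp (ContinuousLinearMap.fst ℝ ℝ ℝ)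
    - Complex.I • Complex.ofRealCLM.comp (ContinuousLinearMap.snd ℝ ℝ ℝ)

lemma phic_eq : φc = ⇑LphiC := by
  funext p
  simp [φc, LphiC, smul_eq_mul]

lemma phibc_eq : φbc = ⇑LphibC := by
  funext p
  simp [φbc, LphibC, smul_eq_mul, sub_eq_add_neg]

lemma Smc_phic : ContDiff ℝ ∞ φc := by rw [phic_eq]; exact LphiC.contDiff

lemma Smc_phibc : ContDiff ℝ ∞ φbc := by rw [phibc_eq]; exact LphibC.contDiff

lemma dphi_phic (p : P2) : dphi φc p = 1 := by
  rw [dphi, phic_eq, LphiC.fderiv]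
  simp [LphiC, Complex.I_mul_I]
  try norm_num

lemma dphib_phic (p : P2) : dphib φc p = 0 := by
  rw [dphib, phic_eq, LphiC.fderiv]
  simp [LphiC, Complex.I_mul_I]
  try norm_num

lemma dphi_phibc (p : P2) : dphi φbc p = 0 := by
  rw [dphi, phibc_eq, LphibC.fderiv]
  simp [LphibC, Complex.I_mul_I]
  try norm_num

lemma dphib_phibc (p : P2) : dphib φbc p = 1 := by
  rw [dphib, phibc_eq, LphibC.fderiv]
  simp [LphibC, Complex.I_mul_I]
  try norm_num

lemma dphi_const (c : ℂ) (p : P2) : dphi (fun _ => c) p = 0 := by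
  simp [dphi]

lemma dphib_const (c : ℂ) (p : P2) : dphib (fun _ => c) p = 0 := by
  simp [dphib]

lemma dphi_mul (hg : ContDiff ℝ ∞ g) (hh : ContDiff ℝ ∞ h) (p : P2) :
    dphi (fun q => g q * h q) p = dphi g p * h p + g p * dphi h p := by
  have e : ∀ w, fderiv ℝ (fun q => g q * h q) p w
      = g p * fderiv ℝ h p w + h p * fderiv ℝ g p w := by
    intro w
    rw [fderiv_fun_mul (Smc_diff hg p) (Smc_diff hh p)]
    simp [smul_eq_mul]
  simp only [dphi, e]
  ring

lemma dphib_mul (hg : ContDiff ℝ ∞ g) (hh : ContDiff ℝ ∞ h) (p : P2) :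
    dphib (fun q => g q * h q) p = dphib g p * h p + g p * dphib h p := by
  have e : ∀ w, fderiv ℝ (fun q => g q * h q) p w
      = g p * fderiv ℝ h p w + h p * fderiv ℝ g p w := by
    intro w
    rw [fderiv_fun_mul (Smc_diff hg p) (Smc_diff hh p)]
    simp [smul_eq_mul]
  simp only [dphib, e]
  ring

lemma Smc_phic_pow (n : ℕ) : ContDiff ℝ ∞ (fun p => φc p ^ n) := Smc_phic.pow n

lemma Smc_phibc_pow (n : ℕ) : ContDiff ℝ ∞ (fun p => φbc p ^ n) := Smc_phibc.pow n

lemma dphi_phic_pow (n : ℕ) (p : P2) :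
    dphi (fun q => φc q ^ n) p = n * φc p ^ (n - 1) := by
  induction n with
  | zero => simpa using dphi_const 1 p
  | succ m ih =>
    have : (fun q => φc q ^ (m+1)) = fun q => φc q ^ m * φc q := by
      funext q; rw [pow_succ]
    rw [this, dphi_mul (Smc_phic_pow m) Smc_phic p, ih, dphi_phic]
    cases m with
    | zero => simp
    | succ k =>
      push_cast
      ring_nf
      try (rw [pow_succ]; ring)

lemma dphib_phic_pow (n : ℕ) (p : P2) : dphib (fun q => φc q ^ n) p = 0 := by
  induction n with
  | zero => simpa using dphib_const 1 p
  | succ m ih =>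
    have : (fun q => φc q ^ (m+1)) = fun q => φc q ^ m * φc q := by
      funext q; rw [pow_succ]
    rw [this, dphib_mul (Smc_phic_pow m) Smc_phic p, ih, dphib_phic]
    ring

lemma dphi_phibc_pow (n : ℕ) (p : P2) : dphi (fun q => φbc q ^ n) p = 0 := by
  induction n with
  | zero => simpa using dphi_const 1 p
  | succ m ih =>
    have : (fun q => φbc q ^ (m+1)) = fun q => φbc q ^ m * φbc q := by
      funext q; rw [pow_succ]
    rw [this, dphi_mul (Smc_phibc_pow m) Smc_phibc p, ih, dphi_phibc]
    ring

lemma dphib_phibc_pow (n : ℕ) (p : P2) :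
    dphib (fun q => φbc q ^ n) p = n * φbc p ^ (n - 1) := by
  induction n with
  | zero => simpa using dphib_const 1 p
  | succ m ih =>
    have : (fun q => φbc q ^ (m+1)) = fun q => φbc q ^ m * φbc q := by
      funext q; rw [pow_succ]
    rw [this, dphib_mul (Smc_phibc_pow m) Smc_phibc p, ih, dphib_phibc]
    cases m with
    | zero => simp
    | succ k =>
      push_cast
      ring_nf
      try (rw [pow_succ]; ring)

lemma Smc_coef (c : ℂ) (a b : ℕ) : ContDiff ℝ ∞ (fun q => c * φc q ^ a * φbc q ^ b) :=
  (contDiff_const.mul (Smc_phic_pow a)).mul (Smc_phibc_pow b)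

lemma dphi_coef (c : ℂ) (a b : ℕ) (p : P2) :
    dphi (fun q => c * φc q ^ a * φbc q ^ b) p = c * a * φc p ^ (a - 1) * φbc p ^ b := by
  rw [dphi_mul (contDiff_const.mul (Smc_phic_pow a)) (Smc_phibc_pow b) p,
    dphi_mul contDiff_const (Smc_phic_pow a) p, dphi_const, dphi_phic_pow, dphi_phibc_pow]
  ring

lemma dphib_coef (c : ℂ) (a b : ℕ) (p : P2) :
    dphib (fun q => c * φc q ^ a * φbc q ^ b) p = c * b * φc p ^ a * φbc p ^ (b - 1) := by
  rw [dphib_mul (contDiff_const.mul (Smc_phic_pow a)) (Smc_phibc_pow b) p,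
    dphib_mul contDiff_const (Smc_phic_pow a) p, dphib_const, dphib_phic_pow, dphib_phibc_pow]
  ring

end AuxScalar

/-! ### Normal-form terms and lists -/

section AuxNF

/-- A normal-form term: `(c φ^a φ̄^b) • (M *ᵥ u)`. -/
structure TT where
  c : ℂ
  a : ℕ
  b : ℕ
  M : Matrix (Fin 2 × Fin 2) (Fin 2 × Fin 2) ℂ
  u : P2 → V4

/-- Application of a normal-form term. -/
def Tap (t : TT) : P2 → V4 :=
  fun p => (t.c * φc p ^ t.a * φbc p ^ t.b) • (t.M *ᵥ t.u p)

/-- Application of a sum of normal-form terms. -/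
def Lap : List TT → P2 → V4
  | [] => fun _ => 0
  | t :: l => fun p => Tap t p + Lap l p

/-- Smoothness of a term. -/
abbrev TSm (t : TT) : Prop := ContDiff ℝ ∞ t.u

lemma Sm_Tap {t : TT} (h : TSm t) : ContDiff ℝ ∞ (Tap t) :=
  Sm_smul (Smc_coef t.c t.a t.b) (Sm_mulVec t.M h)

lemma Sm_Lap {l : List TT} (h : ∀ t ∈ l, TSm t) : ContDiff ℝ ∞ (Lap l) := by
  induction l with
  | nil => exact contDiff_const
  | cons t l ih =>
    exact (Sm_Tap (h t (by simp))).add (ih fun t' ht' => h t' (by simp [ht']))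

/-- Formal `∂_φ` on term lists. -/
def dL : List TT → List TT
  | [] => []
  | t :: l => ⟨t.c * t.a, t.a - 1, t.b, t.M, t.u⟩ :: ⟨t.c, t.a, t.b, t.M, Dφ t.u⟩ :: dL l

/-- Formal `∂_φ̄` on term lists. -/
def dbL : List TT → List TT
  | [] => []
  | t :: l => ⟨t.c * t.b, t.a, t.b - 1, t.M, t.u⟩ :: ⟨t.c, t.a, t.b, t.M, Dφb t.u⟩ :: dbL l

lemma dL_TSm {l : List TT} (h : ∀ t ∈ l, TSm t) : ∀ t ∈ dL l, TSm t := by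
  induction l with
  | nil => simp [dL]
  | cons t l ih =>
    intro t' ht'
    simp only [dL, List.mem_cons] at ht'
    rcases ht' with rfl | rfl | ht'
    · exact h t (by simp)
    · exact Sm_Dphi (h t (by simp))
    · exact ih (fun s hs => h s (by simp [hs])) t' ht'

lemma dbL_TSm {l : List TT} (h : ∀ t ∈ l, TSm t) : ∀ t ∈ dbL l, TSm t := by
  induction l with
  | nil => simp [dbL]
  | cons t l ih =>
    intro t' ht'
    simp only [dbL, List.mem_cons] at ht'
    rcases ht' with rfl | rfl | ht'
    · exact h t (by simp)
    · exact Sm_Dphib (h t (by simp))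
    · exact ih (fun s hs => h s (by simp [hs])) t' ht'

lemma Dphi_Tap (t : TT) (h : TSm t) :
    Dφ (Tap t) = fun p => Tap ⟨t.c * t.a, t.a - 1, t.b, t.M, t.u⟩ p
      + Tap ⟨t.c, t.a, t.b, t.M, Dφ t.u⟩ p := by
  obtain ⟨c, a, b, M, u⟩ := t
  show Dφ (fun p => (c * φc p ^ a * φbc p ^ b) • (M *ᵥ u p)) = _
  rw [Dphi_smul (Smc_coef c a b) (Sm_mulVec M h), Dphi_mulVec M h]
  funext p
  rw [dphi_coef]
  rfl

lemma Dphib_Tap (t : TT) (h : TSm t) :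
    Dφb (Tap t) = fun p => Tap ⟨t.c * t.b, t.a, t.b - 1, t.M, t.u⟩ p
      + Tap ⟨t.c, t.a, t.b, t.M, Dφb t.u⟩ p := by
  obtain ⟨c, a, b, M, u⟩ := t
  show Dφb (fun p => (c * φc p ^ a * φbc p ^ b) • (M *ᵥ u p)) = _
  rw [Dphib_smul (Smc_coef c a b) (Sm_mulVec M h), Dphib_mulVec M h]
  funext p
  rw [dphib_coef]
  rfl

lemma Dphi_zero : Dφ (fun _ : P2 => (0 : V4)) = fun _ => 0 := by
  funext p
  simp [Dφ, Dx, Dy, fderiv_const]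

lemma Dphib_zero : Dφb (fun _ : P2 => (0 : V4)) = fun _ => 0 := by
  funext p
  simp [Dφb, Dx, Dy, fderiv_const]

lemma Dphi_Lap (l : List TT) (h : ∀ t ∈ l, TSm t) : Dφ (Lap l) = Lap (dL l) := by
  induction l with
  | nil => exact Dphi_zero
  | cons t l ih =>
    have h1 : TSm t := h t (by simp)
    have h2 : ∀ t' ∈ l, TSm t' := fun t' ht' => h t' (by simp [ht'])
    have e : Lap (t :: l) = fun p => Tap t p + Lap l p := rfl
    rw [e, Dphi_add (Sm_Tap h1) (Sm_Lap h2), Dphi_Tap t h1, ih h2]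
    funext p
    show _ = Tap _ p + (Tap _ p + Lap (dL l) p)
    rw [add_assoc]

lemma Dphib_Lap (l : List TT) (h : ∀ t ∈ l, TSm t) : Dφb (Lap l) = Lap (dbL l) := by
  induction l with
  | nil => exact Dphib_zero
  | cons t l ih =>
    have h1 : TSm t := h t (by simp)
    have h2 : ∀ t' ∈ l, TSm t' := fun t' ht' => h t' (by simp [ht'])
    have e : Lap (t :: l) = fun p => Tap t p + Lap l p := rfl
    rw [e, Dphib_add (Sm_Tap h1) (Sm_Lap h2), Dphib_Tap t h1, ih h2]
    funext p
    show _ = Tap _ p + (Tap _ p + Lap (dbL l) p)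
    rw [add_assoc]

end AuxNF

/-! ### Normal forms of the three operators -/

section AuxOps

/-- Normal form of `Q_α`. -/
def lQf (γ : ℝ) (f : P2 → V4) (α : Fin 2) : List TT :=
  [⟨-((Real.sqrt 2 : ℂ) * Complex.I), 0, 0, ψm α, Dφ f⟩,
   ⟨-((Real.sqrt 2 : ℂ) * Complex.I), 0, 1, ψm α, f⟩,
   ⟨(Real.sqrt 2 : ℂ) * Complex.I * (γ : ℂ), 0, 2, ψbardownm α, f⟩]

/-- Normal form of `Q̄^β`. -/
def lQbf (γ : ℝ) (f : P2 → V4) (β : Fin 2) : List TT :=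
  [⟨-((Real.sqrt 2 : ℂ) * Complex.I), 0, 0, ψbarm β, Dφb f⟩,
   ⟨(Real.sqrt 2 : ℂ) * Complex.I, 1, 0, ψbarm β, f⟩,
   ⟨(Real.sqrt 2 : ℂ) * Complex.I * (γ : ℂ), 2, 0, ψupm β, f⟩]

/-- Normal form of `H`. -/
def lHf (γ : ℝ) (f : P2 → V4) : List TT :=
  [⟨-1, 0, 0, 1, Dφ (Dφb f)⟩, ⟨1, 1, 1, 1, f⟩, ⟨1, 0, 0, Fm - 1, f⟩,
   ⟨(3:ℂ)⁻¹, 1, 0, 1, Dφ f⟩, ⟨-(3:ℂ)⁻¹, 0, 1, 1, Dφb f⟩, ⟨(3:ℂ)⁻¹, 0, 0, Fm, f⟩,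
   ⟨2 * (γ : ℂ), 1, 0, ψm 0 * ψm 1, f⟩, ⟨2 * (γ : ℂ), 0, 1, ψbarm 1 * ψbarm 0, f⟩,
   ⟨(γ : ℂ)^2, 2, 2, 1, f⟩]

lemma Qop_eq (γ : ℝ) (f : P2 → V4) (α : Fin 2) :
    Qop γ α f = Lap (lQf γ f α) := by
  funext p
  simp only [Qop, lQf, Lap, Tap, Matrix.mulVec_sub, Matrix.mulVec_smul, pow_zero, pow_one,
    mul_one, one_mul, add_zero]
  module

lemma Qbarop_eq (γ : ℝ) (f : P2 → V4) (β : Fin 2) :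
    Qbarop γ β f = Lap (lQbf γ f β) := by
  funext p
  simp only [Qbarop, lQbf, Lap, Tap, Matrix.mulVec_add, Matrix.mulVec_smul, pow_zero, pow_one,
    mul_one, one_mul, add_zero]
  module

lemma Hop_eq (γ : ℝ) (f : P2 → V4) (hf : ContDiff ℝ ∞ f) :
    Hop γ f = Lap (lHf γ f) := by
  funext p
  simp only [Hop, lHf, Lap, Tap, Matrix.one_mulVec, pow_zero, pow_one, mul_one, one_mul,
    add_zero]
  rw [Dphi_Dphib_comm hf]
  module

end AuxOps

set_option maxHeartbeats 12000000 in
/-- **The su(2|1) algebra (4.18) of the deformed complex model (`n = 3`,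
`λ = 1/3`):** `{Q_α, Q̄^β} = 2δ_α^β [H + (2/3)L − (1/3)F] + 2Z_α{}^β` and
`[Q_α, H] = 0`, with undeformed central charges `Z_α{}^β`. -/
theorem deformed_complex_model_weak_susy_algebra (γ : ℝ) :
    ∀ f : ℝ × ℝ → Fin 2 × Fin 2 → ℂ, ContDiff ℝ (⊤ : ℕ∞) f →
      ∀ α β : Fin 2,
        (∀ p : ℝ × ℝ,
          Qop γ α (Qbarop γ β f) p + Qbarop γ β (Qop γ α f) p =
            (if α = β then
              (2 : ℂ) • (Hop γ f p
                + (2 / 3 : ℂ) • (φc p • Dφ f p - φbc p • Dφb f p)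
                - (3 : ℂ)⁻¹ • (Fm *ᵥ f p))
            else 0) + (2 : ℂ) • (Zm α β *ᵥ f p)) ∧
        (∀ p : ℝ × ℝ, Qop γ α (Hop γ f) p = Hop γ (Qop γ α f) p) := by
  intro f hf
  have hf' : ContDiff ℝ ∞ f := hf.of_le (by simp)
  have h1 : ContDiff ℝ ∞ (Dφ f) := Sm_Dphi hf'
  have h2 : ContDiff ℝ ∞ (Dφb f) := Sm_Dphib hf'
  have h12 : ContDiff ℝ ∞ (Dφ (Dφb f)) := Sm_Dphi h2
  have hs2 : ((Real.sqrt 2 : ℝ) : ℂ)^2 = 2 := by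
    rw [← Complex.ofReal_pow, Real.sq_sqrt (by norm_num : (0:ℝ) ≤ 2)]
    norm_num
  have hI3 : Complex.I^3 = -Complex.I := by
    rw [pow_succ, Complex.I_sq]; ring
  have hI4 : Complex.I^4 = 1 := by
    rw [(by norm_num : (4:ℕ) = 2 + 2), pow_add, Complex.I_sq]; ring
  have hsQ : ∀ α', ∀ t ∈ lQf γ f α', TSm t := by
    intro α' t ht; fin_cases ht <;> first | exact h1 | exact hf'
  have hsQb : ∀ β', ∀ t ∈ lQbf γ f β', TSm t := by
    intro β' t ht; fin_cases ht <;> first | exact h2 | exact hf'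
  have hsH : ∀ t ∈ lHf γ f, TSm t := by
    intro t ht; fin_cases ht <;> first | exact h12 | exact h1 | exact h2 | exact hf'
  have part1 : ∀ α β : Fin 2, ∀ p : ℝ × ℝ,
      Qop γ α (Qbarop γ β f) p + Qbarop γ β (Qop γ α f) p =
        (if α = β then
          (2 : ℂ) • (Hop γ f p
            + (2 / 3 : ℂ) • (φc p • Dφ f p - φbc p • Dφb f p)
            - (3 : ℂ)⁻¹ • (Fm *ᵥ f p))
        else 0) + (2 : ℂ) • (Zm α β *ᵥ f p) := by
    intro α β
    fin_cases α <;> fin_cases β <;>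
    · intro p
      rw [Qbarop_eq γ f _, Qop_eq γ f _, Hop_eq γ f hf']
      simp only [Qop, Qbarop]
      rw [Dphi_Lap (lQbf γ f _) (hsQb _), Dphib_Lap (lQf γ f _) (hsQ _)]
      simp only [lQf, lQbf, lHf, dL, dbL, Lap, Tap]
      simp only [Dphi_Dphib_comm hf']
      funext x
      obtain ⟨i, j⟩ := x
      fin_cases i <;> fin_cases j <;>
      · simp [Matrix.mulVec, dotProduct, Fintype.sum_prod_type, Fin.sum_univ_two,
          Matrix.sub_apply, Matrix.add_apply, Matrix.smul_apply, Matrix.one_apply,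
          Matrix.mul_apply, Matrix.sum_apply, ψm, ψbarm, ψupm, ψbardownm, Fm, Zm, εup, εdown,
          Matrix.kroneckerMap_apply, Matrix.conjTranspose_apply, Matrix.cons_val',
          Matrix.cons_val_zero, Matrix.cons_val_one, Matrix.head_cons, Matrix.head_fin_const,
          Matrix.empty_val', Matrix.cons_val_fin_one, Matrix.of_apply, Matrix.one_mulVec,
          Pi.add_apply, Pi.smul_apply, Pi.sub_apply, Pi.neg_apply, smul_eq_mul,
          Prod.mk.injEq, Prod.ext_iff, Prod.fst_zero, Prod.snd_zero]
        try ring_nf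
        try simp [hs2, Complex.I_sq, hI3, hI4, Prod.ext_iff, Prod.fst_zero, Prod.snd_zero,
          Prod.mk.injEq]
        try ring
  have part2 : ∀ α : Fin 2, ∀ p : ℝ × ℝ, Qop γ α (Hop γ f) p = Hop γ (Qop γ α f) p := by
    intro α
    fin_cases α <;>
    · intro p
      rw [Hop_eq γ f hf', Qop_eq γ f _]
      simp only [Qop, Hop]
      rw [Dphi_Lap (lHf γ f) hsH, Dphi_Lap (lQf γ f _) (hsQ _), Dphib_Lap (lQf γ f _) (hsQ _),
        Dphib_Lap (dL (lQf γ f _)) (dL_TSm (hsQ _))]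
      simp only [lQf, lHf, dL, dbL, Lap, Tap]
      simp only [Dphi_Dphib_comm hf', Dphi_Dphib_comm h1, Dphi_Dphib_comm h2]
      funext x
      obtain ⟨i, j⟩ := x
      fin_cases i <;> fin_cases j <;>
      · simp [Matrix.mulVec, dotProduct, Fintype.sum_prod_type, Fin.sum_univ_two,
          Matrix.sub_apply, Matrix.add_apply, Matrix.smul_apply, Matrix.one_apply,
          Matrix.mul_apply, Matrix.sum_apply, ψm, ψbarm, ψupm, ψbardownm, Fm, Zm, εup, εdown,
          Matrix.kroneckerMap_apply, Matrix.conjTranspose_apply, Matrix.cons_val',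
          Matrix.cons_val_zero, Matrix.cons_val_one, Matrix.head_cons, Matrix.head_fin_const,
          Matrix.empty_val', Matrix.cons_val_fin_one, Matrix.of_apply, Matrix.one_mulVec,
          Pi.add_apply, Pi.smul_apply, Pi.sub_apply, Pi.neg_apply, smul_eq_mul,
          Prod.mk.injEq, Prod.ext_iff, Prod.fst_zero, Prod.snd_zero]
        try ring_nf
        try simp [hs2, Complex.I_sq, hI3, hI4, Prod.ext_iff, Prod.fst_zero, Prod.snd_zero,
          Prod.mk.injEq]
        try ring
  intro α β
  exact ⟨part1 α β, part2 α⟩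

end
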